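/- arXiv:1007.0569 — 2 statements merged into one kernel-verified Lean document; each statement's English description precedes it below -/
import Mathlib

section
/- Let p, q, r be sequences of positive numbers with 1/p_k² + 1/q_k² = 1/r_k² and ∑_{k≥1} r_k²/p_k² < ∞. Let (u_α) be a family in a Hilbert space U with ∑_α p^{2α}‖u_α‖² < ∞ and (v_α) a family in a Hilbert space X with ∑_α r^{−2α}‖v_α‖² < ∞. Then for each multi-index α, the series ∑_β C(α+β,β)^{1/2} v_{α+β} ⊗ u_β converges absolutely in X⊗U, and with D_α denoting its sum, ∑_α q^{−2α}‖D_α‖² ≤ (∏_{k≥1} p_k²/(p_k²−r_k²)) (∑_α p^{2α}‖u_α‖²)(∑_α r^{−2α}‖v_α‖²). -/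
/-!
Put `x_k = r_k² / p_k² ∈ [0, 1)`, so that `r_k² / q_k² = 1 - x_k`. Because
`x^β p^{2β} r^{2α} r^{-2(α+β)} = 1`, Cauchy–Schwarz in `β` bounds `‖D_α‖²` by
`r^{2α} (∑_β C(α+β,β) x^β) · ∑_β p^{2β} ‖u_β‖² r^{-2(α+β)} ‖v_{α+β}‖²`.
Coordinatewise, the first sum is a product of negative binomial series,
`∑_β C(α+β,β) x^β = ∏_k (1 - x_k)^{-(α_k+1)}`, so after multiplying by `q^{-2α}` it is at most
`∏_k (1 - x_k)⁻¹ = ∏_k p_k² / (p_k² - r_k²)`. Summed over `α`, the second factor is a subseries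
of `(∑_β p^{2β} ‖u_β‖²) (∑_γ r^{-2γ} ‖v_γ‖²)`, since `(α, β) ↦ (β, α + β)` is injective.
-/

open scoped BigOperators

noncomputable section

abbrev MultiIndex := ℕ →₀ ℕ

/-- `r^α = ∏ₖ r_k^{α_k}` -/
def mpow (r : ℕ → ℝ) (α : MultiIndex) : ℝ := ∏ k ∈ α.support, r k ^ α k

/-- `α! = ∏ₖ α_k!` -/
def mfact (α : MultiIndex) : ℕ := ∏ k ∈ α.support, (α k).factorial

/-- generalized binomial coefficient `C(α,β) = ∏ₖ C(α_k, β_k)` -/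
def mchoose (α β : MultiIndex) : ℕ :=
  ∏ k ∈ α.support ∪ β.support, Nat.choose (α k) (β k)

/-- `|α| = ∑ₖ α_k` -/
def mdeg (α : MultiIndex) : ℕ := ∑ k ∈ α.support, α k

open Finset

section Mpow

variable {c d : ℕ → ℝ}

lemma mpow_eq_prod_of_support_subset {γ : MultiIndex} {s : Finset ℕ} (h : γ.support ⊆ s) :
    mpow c γ = ∏ k ∈ s, c k ^ γ k :=
  prod_subset h fun k _ hk => by simp [Finsupp.notMem_support_iff.mp hk]

lemma mpow_nonneg (h : ∀ k, 0 ≤ c k) (γ : MultiIndex) : 0 ≤ mpow c γ :=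
  prod_nonneg fun k _ => pow_nonneg (h k) _

lemma mpow_pos (h : ∀ k, 0 < c k) (γ : MultiIndex) : 0 < mpow c γ :=
  prod_pos fun k _ => pow_pos (h k) _

lemma mpow_mul_sq_nonneg (h : ∀ k, 0 ≤ c k) (y : MultiIndex → ℝ) (γ : MultiIndex) :
    0 ≤ mpow c γ * y γ ^ 2 :=
  mul_nonneg (mpow_nonneg h γ) (sq_nonneg _)

lemma mpow_mul (γ : MultiIndex) : mpow (fun k => c k * d k) γ = mpow c γ * mpow d γ := by
  simp only [mpow, mul_pow, prod_mul_distrib]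

lemma mpow_add (α β : MultiIndex) : mpow c (α + β) = mpow c α * mpow c β :=
  Finsupp.prod_add_index' (fun _ => pow_zero _) (fun _ _ _ => pow_add _ _ _)

lemma mpow_mul_mpow_inv (h : ∀ k, c k ≠ 0) (γ : MultiIndex) :
    mpow c γ * mpow (fun k => (c k)⁻¹) γ = 1 := by
  rw [← mpow_mul]
  simp [mpow, mul_inv_cancel₀ (h _)]

end Mpow

lemma mchoose_add_eq_prod_of_support_subset {α β : MultiIndex} {s : Finset ℕ}
    (hα : α.support ⊆ s) (hβ : β.support ⊆ s) :
    (mchoose (α + β) β : ℝ) = ∏ k ∈ s, ((β k + α k).choose (α k) : ℝ) := by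
  rw [mchoose, Nat.cast_prod]
  refine prod_subset (union_subset (Finsupp.support_add.trans (union_subset hα hβ)) hβ)
    (fun k _ hk => ?_) |>.trans (prod_congr rfl fun k _ => ?_)
  · simp_all
  · rw [Finsupp.add_apply, ← Nat.choose_symm_add, add_comm]

lemma Real.prod_le_tprod_of_one_le {ι : Type*} {f : ι → ℝ} (h1 : ∀ i, 1 ≤ f i)
    (hf : Summable fun i => Real.log (f i)) (s : Finset ι) : ∏ i ∈ s, f i ≤ ∏' i, f i := by
  have hpos : ∀ i, 0 < f i := fun i => one_pos.trans_le (h1 i)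
  rw [← Real.rexp_tsum_eq_tprod hpos hf, ← prod_congr rfl fun i _ => Real.exp_log (hpos i),
    ← Real.exp_sum]
  exact Real.exp_le_exp.2 (hf.sum_le_tsum s fun i _ => Real.log_nonneg (h1 i))

lemma Real.summable_log_inv_one_sub {ι : Type*} {x : ι → ℝ} (hx : Summable x) :
    Summable fun i => Real.log (1 - x i)⁻¹ := by
  simpa [Real.log_inv, sub_eq_add_neg] using (Real.summable_log_one_add_of_summable hx.neg).neg

lemma sum_prod_le_prod_tsum {h : ℕ → ℕ → ℝ} (hh : ∀ k n, 0 ≤ h k n) (hs : ∀ k, Summable (h k))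
    {s : Finset ℕ} {F : Finset MultiIndex} (hF : ∀ β ∈ F, β.support ⊆ s) :
    ∑ β ∈ F, ∏ k ∈ s, h k (β k) ≤ ∏ k ∈ s, ∑' n, h k n := by
  classical
  set restrict : MultiIndex → (s → ℕ) := fun β k => β k
  have hinj : Set.InjOn restrict F := by
    intro β hβ β' hβ' hββ'
    ext k
    by_cases hk : k ∈ s
    · exact congr_fun hββ' ⟨k, hk⟩
    · rw [Finsupp.notMem_support_iff.1 fun h => hk (hF β hβ h),
        Finsupp.notMem_support_iff.1 fun h => hk (hF β' hβ' h)]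
  have himage : F.image restrict ⊆ Fintype.piFinset fun k => F.image fun β => β k :=
    fun g hg => by
      obtain ⟨β, hβ, rfl⟩ := mem_image.1 hg
      exact Fintype.mem_piFinset.2 fun k => mem_image_of_mem _ hβ
  calc ∑ β ∈ F, ∏ k ∈ s, h k (β k) = ∑ g ∈ F.image restrict, ∏ k : s, h k (g k) := by
        rw [sum_image hinj]
        exact sum_congr rfl fun β _ => (prod_coe_sort s fun k => h k (β k)).symm
    _ ≤ ∑ g ∈ Fintype.piFinset fun k => F.image fun β => β k, ∏ k : s, h k (g k) :=
        sum_le_sum_of_subset_of_nonneg himage fun _ _ _ => prod_nonneg fun _ _ => hh _ _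
    _ = ∏ k : s, ∑ n ∈ F.image fun β => β k, h k n := (prod_univ_sum _ _).symm
    _ ≤ ∏ k : s, ∑' n, h k n :=
        prod_le_prod (fun _ _ => sum_nonneg fun _ _ => hh _ _)
          fun k _ => (hs k).sum_le_tsum _ fun _ _ => hh _ _
    _ = ∏ k ∈ s, ∑' n, h k n := prod_coe_sort s fun k => ∑' n, h k n

section NegativeBinomial

variable {x : ℕ → ℝ} (hx0 : ∀ k, 0 ≤ x k) (hx1 : ∀ k, x k < 1) (hx : Summable x)
include hx0 hx1 hx

lemma mpow_one_sub_mul_sum_mchoose_le (α : MultiIndex) (F : Finset MultiIndex) :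
    mpow (fun k => 1 - x k) α * ∑ β ∈ F, (mchoose (α + β) β : ℝ) * mpow x β
      ≤ ∏' k, (1 - x k)⁻¹ := by
  classical
  have hnorm : ∀ k, ‖x k‖ < 1 := fun k => by rw [Real.norm_of_nonneg (hx0 k)]; exact hx1 k
  have hpos : ∀ k, 0 < 1 - x k := fun k => sub_pos.2 (hx1 k)
  set s := α.support ∪ F.sup Finsupp.support
  have hαs : α.support ⊆ s := subset_union_left
  have hβs : ∀ β ∈ F, β.support ⊆ s := fun β hβ => (le_sup hβ).trans subset_union_right
  have hterm : ∀ β ∈ F, (mchoose (α + β) β : ℝ) * mpow x β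
      = ∏ k ∈ s, ((β k + α k).choose (α k) : ℝ) * x k ^ β k := fun β hβ => by
    rw [prod_mul_distrib, mchoose_add_eq_prod_of_support_subset hαs (hβs β hβ),
      mpow_eq_prod_of_support_subset (hβs β hβ)]
  calc mpow (fun k => 1 - x k) α * ∑ β ∈ F, (mchoose (α + β) β : ℝ) * mpow x β
      ≤ mpow (fun k => 1 - x k) α * ∏ k ∈ s, ∑' n, ((n + α k).choose (α k) : ℝ) * x k ^ n := by
        rw [sum_congr rfl hterm]
        exact mul_le_mul_of_nonneg_left
          (sum_prod_le_prod_tsum (fun k n => by have := hx0 k; positivity)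
            (fun k => summable_choose_mul_geometric_of_norm_lt_one _ (hnorm k)) hβs)
          (mpow_nonneg (fun k => (hpos k).le) α)
    _ = ∏ k ∈ s, (1 - x k)⁻¹ := by
        rw [mpow_eq_prod_of_support_subset hαs, ← prod_mul_distrib]
        refine prod_congr rfl fun k _ => ?_
        rw [tsum_choose_mul_geometric_of_norm_lt_one _ (hnorm k)]
        field_simp [(hpos k).ne']
        ring
    _ ≤ ∏' k, (1 - x k)⁻¹ :=
        Real.prod_le_tprod_of_one_le (fun k => one_le_inv₀ (hpos k) |>.2 (by linarith [hx0 k]))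
          (Real.summable_log_inv_one_sub hx) s

lemma sum_mchoose_mul_mpow_le_div (α : MultiIndex) (F : Finset MultiIndex) :
    ∑ β ∈ F, (mchoose (α + β) β : ℝ) * mpow x β
      ≤ (∏' k, (1 - x k)⁻¹) / mpow (fun k => 1 - x k) α :=
  (le_div_iff₀' (mpow_pos (fun k => sub_pos.2 (hx1 k)) α)).2
    (mpow_one_sub_mul_sum_mchoose_le hx0 hx1 hx α F)

lemma summable_mchoose_mul_mpow (α : MultiIndex) :
    Summable fun β => (mchoose (α + β) β : ℝ) * mpow x β :=
  summable_of_sum_le (fun β => mul_nonneg (Nat.cast_nonneg _) (mpow_nonneg hx0 β))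
    (sum_mchoose_mul_mpow_le_div hx0 hx1 hx α)

lemma mpow_one_sub_mul_tsum_mchoose_le (α : MultiIndex) :
    mpow (fun k => 1 - x k) α * ∑' β, (mchoose (α + β) β : ℝ) * mpow x β
      ≤ ∏' k, (1 - x k)⁻¹ := by
  rw [← le_div_iff₀' (mpow_pos (fun k => sub_pos.2 (hx1 k)) α)]
  exact Real.tsum_le_of_sum_le (fun β => mul_nonneg (Nat.cast_nonneg _) (mpow_nonneg hx0 β))
    (sum_mchoose_mul_mpow_le_div hx0 hx1 hx α)

end NegativeBinomial

section CauchySchwarz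

variable {ι : Type*} {a b : ι → ℝ} (ha0 : ∀ i, 0 ≤ a i) (hb0 : ∀ i, 0 ≤ b i)
include ha0 hb0

lemma Real.summable_sqrt_mul_sqrt (ha : Summable a) (hb : Summable b) :
    Summable fun i => √(a i) * √(b i) :=
  .of_nonneg_of_le (fun _ => by positivity)
    (fun i => by
      nlinarith [sq_nonneg (√(a i) - √(b i)), Real.sq_sqrt (ha0 i), Real.sq_sqrt (hb0 i)])
    ((ha.add hb).div_const 2)

lemma Real.tsum_sqrt_mul_sqrt_le (ha : Summable a) (hb : Summable b) :
    ∑' i, √(a i) * √(b i) ≤ √(∑' i, a i) * √(∑' i, b i) :=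
  Real.tsum_le_of_sum_le (fun _ => by positivity) fun s =>
    (Real.sum_sqrt_mul_sqrt_le s ha0 hb0).trans <| by
      gcongr
      exacts [ha.sum_le_tsum s fun i _ => ha0 i, hb.sum_le_tsum s fun i _ => hb0 i]

lemma norm_tsum_sq_le_tsum_mul_tsum {E : Type*} [SeminormedAddCommGroup E] {F : ι → E}
    (ha : Summable a) (hb : Summable b) (hF : ∀ i, ‖F i‖ = √(a i) * √(b i)) :
    ‖∑' i, F i‖ ^ 2 ≤ (∑' i, a i) * ∑' i, b i := by
  have hsum : Summable fun i => ‖F i‖ := by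
    simpa only [hF] using Real.summable_sqrt_mul_sqrt ha0 hb0 ha hb
  calc ‖∑' i, F i‖ ^ 2 ≤ (∑' i, √(a i) * √(b i)) ^ 2 := by
        rw [← tsum_congr hF]
        exact pow_le_pow_left₀ (norm_nonneg _) (norm_tsum_le_tsum_norm hsum) 2
    _ ≤ (√(∑' i, a i) * √(∑' i, b i)) ^ 2 :=
        pow_le_pow_left₀ (tsum_nonneg fun _ => by positivity)
          (Real.tsum_sqrt_mul_sqrt_le ha0 hb0 ha hb) 2
    _ = (∑' i, a i) * ∑' i, b i := by
        rw [mul_pow, Real.sq_sqrt (tsum_nonneg ha0), Real.sq_sqrt (tsum_nonneg hb0)]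

end CauchySchwarz

section Convolution

variable {M : Type*} [AddCommMonoid M] [IsRightCancelAdd M]

lemma injective_snd_fst_add_snd : Function.Injective fun z : M × M => (z.2, z.1 + z.2) :=
  fun z w h => by
    simp only [Prod.mk.injEq] at h
    exact Prod.ext (add_right_cancel (h.1 ▸ h.2)) h.1

variable {f g : M → ℝ} (hf0 : ∀ β, 0 ≤ f β) (hg0 : ∀ γ, 0 ≤ g γ) (hf : Summable f)
  (hg : Summable g)
include hf0 hg0 hf hg

lemma summable_prod_mul_comp_add : Summable fun z : M × M => f z.2 * g (z.1 + z.2) :=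
  (hf.mul_of_nonneg hg (fun β => hf0 β) (fun γ => hg0 γ)).comp_injective
    injective_snd_fst_add_snd

lemma summable_mul_comp_add (α : M) : Summable fun β => f β * g (α + β) :=
  (summable_prod_mul_comp_add hf0 hg0 hf hg).comp_injective (Prod.mk_right_injective α)

lemma summable_tsum_mul_comp_add : Summable fun α => ∑' β, f β * g (α + β) :=
  ((summable_prod_of_nonneg fun _ => mul_nonneg (hf0 _) (hg0 _)).1
    (summable_prod_mul_comp_add hf0 hg0 hf hg)).2

lemma tsum_tsum_mul_comp_add_le :
    ∑' α, ∑' β, f β * g (α + β) ≤ (∑' β, f β) * ∑' γ, g γ := by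
  have hprod := hf.mul_of_nonneg hg (fun β => hf0 β) (fun γ => hg0 γ)
  calc ∑' α, ∑' β, f β * g (α + β) = ∑' z : M × M, f z.2 * g (z.1 + z.2) :=
        ((summable_prod_mul_comp_add hf0 hg0 hf hg).tsum_prod'
          (summable_mul_comp_add hf0 hg0 hf hg)).symm
    _ ≤ ∑' z : M × M, f z.1 * g z.2 :=
        tsum_comp_le_tsum_of_inj hprod (fun z => mul_nonneg (hf0 _) (hg0 _))
          injective_snd_fst_add_snd
    _ = (∑' β, f β) * ∑' γ, g γ := (hf.tsum_mul_tsum hg hprod).symm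

end Convolution

lemma inv_sq_mul_sq_eq_one_sub {p q r : ℝ} (hr : r ≠ 0) (h : 1 / p ^ 2 + 1 / q ^ 2 = 1 / r ^ 2) :
    (q ^ 2)⁻¹ * r ^ 2 = 1 - r ^ 2 / p ^ 2 := by
  rw [← one_div, eq_sub_of_add_eq' h]
  field_simp

lemma sqrt_mul_sqrt_mpow_weights {w ρ : ℕ → ℝ} (hw : ∀ k, 0 < w k) (hρ : ∀ k, 0 < ρ k)
    {c a b : ℝ} (hc : 0 ≤ c) (ha : 0 ≤ a) (hb : 0 ≤ b) (α β : MultiIndex) :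
    √(c * mpow (fun k => ρ k / w k) β * mpow ρ α)
        * √(mpow w β * b ^ 2 * (mpow (fun k => (ρ k)⁻¹) (α + β) * a ^ 2))
      = √c * (a * b) := by
  have hweights : mpow (fun k => ρ k / w k) β * mpow ρ α
      * (mpow w β * mpow (fun k => (ρ k)⁻¹) (α + β)) = 1 := by
    have hdiv : mpow (fun k => ρ k / w k) β * mpow w β = mpow ρ β := by
      rw [← mpow_mul]
      simp only [div_mul_cancel₀ _ (hw _).ne']
    rw [mul_mul_mul_comm, hdiv, ← mul_assoc, mul_comm (mpow ρ β), ← mpow_add,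
      mpow_mul_mpow_inv fun k => (hρ k).ne']
  have hnonneg : 0 ≤ c * mpow (fun k => ρ k / w k) β * mpow ρ α :=
    mul_nonneg (mul_nonneg hc (mpow_nonneg (fun k => (div_pos (hρ k) (hw k)).le) β))
      (mpow_nonneg (fun k => (hρ k).le) α)
  rw [← Real.sqrt_mul hnonneg, ← Real.sqrt_sq (mul_nonneg ha hb), ← Real.sqrt_mul hc]
  congr 1
  linear_combination c * (a * b) ^ 2 * hweights

section WeightedBound

variable {E : Type*} [SeminormedAddCommGroup E] {w ρ σ : ℕ → ℝ}
  (hw : ∀ k, 0 < w k) (hρ : ∀ k, 0 < ρ k) (hσ : ∀ k, 0 < σ k)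
  (hσρ : ∀ k, σ k * ρ k = 1 - ρ k / w k) (hx : Summable fun k => ρ k / w k)
  {a b : MultiIndex → ℝ} (ha0 : ∀ γ, 0 ≤ a γ) (hb0 : ∀ β, 0 ≤ b β)
  (ha : Summable fun γ => mpow (fun k => (ρ k)⁻¹) γ * a γ ^ 2)
  (hb : Summable fun β => mpow w β * b β ^ 2)
  {D : MultiIndex → MultiIndex → E}
  (hD : ∀ α β, ‖D α β‖ = √(mchoose (α + β) β) * (a (α + β) * b β))
include hw hρ hσ hσρ hx ha0 hb0 ha hb hD

lemma summable_norm_and_mpow_mul_norm_tsum_sq_le (α : MultiIndex) :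
    Summable (fun β => ‖D α β‖) ∧ mpow σ α * ‖∑' β, D α β‖ ^ 2
      ≤ (∏' k, (1 - ρ k / w k)⁻¹)
        * ∑' β, mpow w β * b β ^ 2 * (mpow (fun k => (ρ k)⁻¹) (α + β) * a (α + β) ^ 2) := by
  have hx0 : ∀ k, 0 ≤ ρ k / w k := fun k => (div_pos (hρ k) (hw k)).le
  have hx1 : ∀ k, ρ k / w k < 1 := fun k => sub_pos.1 (hσρ k ▸ mul_pos (hσ k) (hρ k))
  have hc0 : ∀ β, 0 ≤ (mchoose (α + β) β : ℝ) * mpow (fun k => ρ k / w k) β * mpow ρ α :=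
    fun β => mul_nonneg (mul_nonneg (Nat.cast_nonneg _) (mpow_nonneg hx0 β))
      (mpow_nonneg (fun k => (hρ k).le) α)
  have hf0 := mpow_mul_sq_nonneg (fun k => (hw k).le) b
  have hg0 := mpow_mul_sq_nonneg (fun k => (inv_pos.2 (hρ k)).le) a
  have hc := (summable_mchoose_mul_mpow hx0 hx1 hx α).mul_right (mpow ρ α)
  have hfg := summable_mul_comp_add hf0 hg0 hb ha α
  have hfg0 := fun β => mul_nonneg (hf0 β) (hg0 (α + β))
  have hnorm : ∀ β, ‖D α β‖ = √((mchoose (α + β) β : ℝ) * mpow (fun k => ρ k / w k) β * mpow ρ α)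
      * √(mpow w β * b β ^ 2 * (mpow (fun k => (ρ k)⁻¹) (α + β) * a (α + β) ^ 2)) := fun β => by
    rw [hD, sqrt_mul_sqrt_mpow_weights hw hρ (Nat.cast_nonneg _) (ha0 _) (hb0 _)]
  refine ⟨(Real.summable_sqrt_mul_sqrt hc0 hfg0 hc hfg).congr fun β => (hnorm β).symm, ?_⟩
  calc mpow σ α * ‖∑' β, D α β‖ ^ 2
      ≤ mpow σ α * ((∑' β, (mchoose (α + β) β : ℝ) * mpow (fun k => ρ k / w k) β * mpow ρ α)
          * ∑' β, mpow w β * b β ^ 2 * (mpow (fun k => (ρ k)⁻¹) (α + β) * a (α + β) ^ 2)) :=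
        mul_le_mul_of_nonneg_left (norm_tsum_sq_le_tsum_mul_tsum hc0 hfg0 hc hfg hnorm)
          (mpow_nonneg (fun k => (hσ k).le) α)
    _ = (mpow (fun k => 1 - ρ k / w k) α
          * ∑' β, (mchoose (α + β) β : ℝ) * mpow (fun k => ρ k / w k) β)
          * ∑' β, mpow w β * b β ^ 2 * (mpow (fun k => (ρ k)⁻¹) (α + β) * a (α + β) ^ 2) := by
        rw [tsum_mul_right, ← funext hσρ, mpow_mul]
        ring
    _ ≤ _ := mul_le_mul_of_nonneg_right (mpow_one_sub_mul_tsum_mchoose_le hx0 hx1 hx α)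
          (tsum_nonneg hfg0)

theorem summable_norm_and_tsum_mpow_mul_norm_tsum_sq_le :
    (∀ α, Summable fun β => ‖D α β‖) ∧ ∑' α, mpow σ α * ‖∑' β, D α β‖ ^ 2
      ≤ (∏' k, (1 - ρ k / w k)⁻¹)
        * ((∑' β, mpow w β * b β ^ 2) * ∑' γ, mpow (fun k => (ρ k)⁻¹) γ * a γ ^ 2) := by
  have hbound := summable_norm_and_mpow_mul_norm_tsum_sq_le hw hρ hσ hσρ hx ha0 hb0 ha hb hD
  refine ⟨fun α => (hbound α).1, ?_⟩
  have hf0 := mpow_mul_sq_nonneg (fun k => (hw k).le) b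
  have hg0 := mpow_mul_sq_nonneg (fun k => (inv_pos.2 (hρ k)).le) a
  set K := ∏' k, (1 - ρ k / w k)⁻¹
  have hK : 0 ≤ K := tprod_nonneg fun k => (inv_pos.2 (hσρ k ▸ mul_pos (hσ k) (hρ k))).le
  have hS := (summable_tsum_mul_comp_add hf0 hg0 hb ha).mul_left K
  have hL := hS.of_nonneg_of_le
    (fun α => mpow_mul_sq_nonneg (fun k => (hσ k).le) (fun α => ‖∑' β, D α β‖) α)
    fun α => (hbound α).2
  calc ∑' α, mpow σ α * ‖∑' β, D α β‖ ^ 2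
      ≤ ∑' α, K * ∑' β, mpow w β * b β ^ 2 * (mpow (fun k => (ρ k)⁻¹) (α + β) * a (α + β) ^ 2) :=
        hL.tsum_le_tsum (fun α => (hbound α).2) hS
    _ = K * ∑' α, ∑' β,
          mpow w β * b β ^ 2 * (mpow (fun k => (ρ k)⁻¹) (α + β) * a (α + β) ^ 2) :=
        tsum_mul_left
    _ ≤ _ := mul_le_mul_of_nonneg_left (tsum_tsum_mul_comp_add_le hf0 hg0 hb ha) hK

end WeightedBound

/-- The Hilbert tensor product `X ⊗ U` is modeled by a Hilbert space `W` together with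
a bilinear map `t` which is norm-multiplicative on elementary tensors. -/
theorem stmt12_general {U X W : Type*}
    [NormedAddCommGroup U] [InnerProductSpace ℝ U]
    [NormedAddCommGroup X] [InnerProductSpace ℝ X]
    [NormedAddCommGroup W] [InnerProductSpace ℝ W]
    (t : X →ₗ[ℝ] U →ₗ[ℝ] W) (ht : ∀ (x : X) (y : U), ‖t x y‖ = ‖x‖ * ‖y‖)
    (p q r : ℕ → ℝ) (hp : ∀ k, 0 < p k) (hq : ∀ k, 0 < q k) (hr : ∀ k, 0 < r k)
    (hpqr : ∀ k, 1 / (p k) ^ 2 + 1 / (q k) ^ 2 = 1 / (r k) ^ 2)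
    (hrp : Summable fun k => (r k) ^ 2 / (p k) ^ 2)
    (u : MultiIndex → U) (v : MultiIndex → X)
    (hu : Summable fun α => mpow (fun k => (p k) ^ 2) α * ‖u α‖ ^ 2)
    (hv : Summable fun α => mpow (fun k => ((r k) ^ 2)⁻¹) α * ‖v α‖ ^ 2) :
    (∀ α : MultiIndex, Summable fun β : MultiIndex =>
        ‖Real.sqrt (mchoose (α + β) β) • t (v (α + β)) (u β)‖) ∧
    ∑' α : MultiIndex, mpow (fun k => ((q k) ^ 2)⁻¹) α *
        ‖∑' β : MultiIndex, Real.sqrt (mchoose (α + β) β) • t (v (α + β)) (u β)‖ ^ 2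
      ≤ (∏' k, (p k) ^ 2 / ((p k) ^ 2 - (r k) ^ 2)) *
        ((∑' α : MultiIndex, mpow (fun k => (p k) ^ 2) α * ‖u α‖ ^ 2) *
         (∑' α : MultiIndex, mpow (fun k => ((r k) ^ 2)⁻¹) α * ‖v α‖ ^ 2)) := by
  obtain ⟨hsum, hle⟩ := summable_norm_and_tsum_mpow_mul_norm_tsum_sq_le
    (w := fun k => (p k) ^ 2) (ρ := fun k => (r k) ^ 2) (σ := fun k => ((q k) ^ 2)⁻¹)
    (a := fun γ => ‖v γ‖) (b := fun β => ‖u β‖)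
    (D := fun α β => Real.sqrt (mchoose (α + β) β) • t (v (α + β)) (u β))
    (fun k => pow_pos (hp k) 2) (fun k => pow_pos (hr k) 2) (fun k => inv_pos.2 (pow_pos (hq k) 2))
    (fun k => inv_sq_mul_sq_eq_one_sub (hr k).ne' (hpqr k)) hrp
    (fun _ => norm_nonneg _) (fun _ => norm_nonneg _) hv hu
    (fun α β => by rw [norm_smul, Real.norm_of_nonneg (Real.sqrt_nonneg _), ht])
  refine ⟨hsum, hle.trans_eq ?_⟩
  congr 1
  exact tprod_congr fun k => by rw [one_sub_div (pow_pos (hp k) 2).ne', inv_div]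

/-- Theorem 4.3(b): Malliavin derivative bound.
The Hilbert tensor product `X ⊗ U` is modeled by a Hilbert space `W` together with
a bilinear map `t` which is norm-multiplicative on elementary tensors. -/
theorem stmt12 {U X W : Type*}
    [NormedAddCommGroup U] [InnerProductSpace ℝ U]
    [NormedAddCommGroup X] [InnerProductSpace ℝ X]
    [NormedAddCommGroup W] [InnerProductSpace ℝ W] [CompleteSpace W]
    (t : X →ₗ[ℝ] U →ₗ[ℝ] W) (ht : ∀ (x : X) (y : U), ‖t x y‖ = ‖x‖ * ‖y‖)
    (p q r : ℕ → ℝ) (hp : ∀ k, 0 < p k) (hq : ∀ k, 0 < q k) (hr : ∀ k, 0 < r k)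
    (hpqr : ∀ k, 1 / (p k) ^ 2 + 1 / (q k) ^ 2 = 1 / (r k) ^ 2)
    (hrp : Summable fun k => (r k) ^ 2 / (p k) ^ 2)
    (u : MultiIndex → U) (v : MultiIndex → X)
    (hu : Summable fun α => mpow (fun k => (p k) ^ 2) α * ‖u α‖ ^ 2)
    (hv : Summable fun α => mpow (fun k => ((r k) ^ 2)⁻¹) α * ‖v α‖ ^ 2) :
    (∀ α : MultiIndex, Summable fun β : MultiIndex =>
        ‖Real.sqrt (mchoose (α + β) β) • t (v (α + β)) (u β)‖) ∧
    ∑' α : MultiIndex, mpow (fun k => ((q k) ^ 2)⁻¹) α *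
        ‖∑' β : MultiIndex, Real.sqrt (mchoose (α + β) β) • t (v (α + β)) (u β)‖ ^ 2
      ≤ (∏' k, (p k) ^ 2 / ((p k) ^ 2 - (r k) ^ 2)) *
        ((∑' α : MultiIndex, mpow (fun k => (p k) ^ 2) α * ‖u α‖ ^ 2) *
         (∑' α : MultiIndex, mpow (fun k => ((r k) ^ 2)⁻¹) α * ‖v α‖ ^ 2)) :=
  stmt12_general t ht p q r hp hq hr hpqr hrp u v hu hv

end
end

section
/- In the one-dimensional case: if u, f, v : ℕ → ℝ and p, q, r > 0 with 1/p + 1/q = 1/r and r < p, and ∑_n pⁿu_n² < ∞, ∑_n qⁿf_n² < ∞, ∑_n v_n²/rⁿ < ∞, then the duality ∑_n (δ_u(f))_n v_n = ∑_n f_n (D_u(v))_n holds, where (δ_u(f))_n = ∑_{k=0}^n C(n,k)^{1/2} f_k u_{n−k} and (D_u(v))_n = ∑_{k≥0} C(n+k,k)^{1/2} v_{n+k} u_k, with all series converging absolutely. -/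
open scoped BigOperators

noncomputable section

/-! Put `s = r/q` and `t = r/p`, so that `s + t = 1`. The square of
`F(j,k) = f_j √C(j+k,k) v_{j+k} u_k` factors as
`(q^j f_j²)(p^k u_k²) · C(j+k,j) s^j t^k v_{j+k}²/r^{j+k}`.
The first factor is summable over pairs as a product of summable sequences, the second because the
binomial weights `C(j+k,j) s^j t^k` add up to `(s+t)^n = 1` on each antidiagonal `j + k = n`.
By AM-GM `F` is absolutely summable, and both sides of the duality are its sum: grouped along
antidiagonals on the left, along rows on the right. -/

open Finset

section Antidiagonal

variable {A : Type*} [AddCommMonoid A] [HasAntidiagonal A]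

theorem summable_iff_summable_sum_antidiagonal_of_nonneg {g : A × A → ℝ} (hg : ∀ x, 0 ≤ g x) :
    Summable g ↔ Summable fun n => ∑ x ∈ antidiagonal n, g x := by
  rw [← HasAntidiagonal.sigmaAntidiagonalEquivProd.summable_iff, Function.comp_def,
    summable_sigma_of_nonneg fun _ => hg _]
  exact (and_iff_right fun _ => Summable.of_finite).trans
    (summable_congr fun n => Finset.tsum_subtype (antidiagonal n) g)

theorem Summable.tsum_sum_antidiagonal {α : Type*} [AddCommMonoid α] [TopologicalSpace α]
    [ContinuousAdd α] [T3Space α] {F : A × A → α} (hF : Summable F) :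
    ∑' n, ∑ x ∈ antidiagonal n, F x = ∑' x, F x := by
  simp only [← Finset.tsum_subtype (antidiagonal _) F]
  rw [← HasAntidiagonal.sigmaAntidiagonalEquivProd.tsum_eq]
  exact ((HasAntidiagonal.sigmaAntidiagonalEquivProd.summable_iff.2 hF).tsum_sigma'
    fun _ => Summable.of_finite).symm

end Antidiagonal

theorem summable_abs_of_sq_le_mul {ι : Type*} {F X Y : ι → ℝ} (hX : Summable X)
    (hY : Summable Y) (hX0 : ∀ i, 0 ≤ X i) (hY0 : ∀ i, 0 ≤ Y i) (h : ∀ i, F i ^ 2 ≤ X i * Y i) :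
    Summable fun i => |F i| := by
  refine ((hX.add hY).div_const 2).of_nonneg_of_le (fun _ => abs_nonneg _) fun i => ?_
  nlinarith [hX0 i, hY0 i, h i, sq_abs (F i), abs_nonneg (F i), sq_nonneg (X i - Y i)]

def binomialWeight (s t : ℝ) (x : ℕ × ℕ) : ℝ := (x.1 + x.2).choose x.1 * s ^ x.1 * t ^ x.2

theorem binomialWeight_nonneg {s t : ℝ} (hs : 0 ≤ s) (ht : 0 ≤ t) (x : ℕ × ℕ) :
    0 ≤ binomialWeight s t x := by
  unfold binomialWeight
  positivity

theorem sum_antidiagonal_binomialWeight (s t : ℝ) (n : ℕ) :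
    ∑ x ∈ antidiagonal n, binomialWeight s t x = (s + t) ^ n := by
  rw [(Commute.all s t).add_pow']
  refine Finset.sum_congr rfl fun x hx => ?_
  rw [binomialWeight, mem_antidiagonal.1 hx, nsmul_eq_mul, mul_assoc]

theorem summable_binomialWeight_mul {s t : ℝ} (hs : 0 ≤ s) (ht : 0 ≤ t) (hst : s + t = 1)
    {g : ℕ → ℝ} (hg0 : ∀ n, 0 ≤ g n) (hg : Summable g) :
    Summable fun x : ℕ × ℕ => binomialWeight s t x * g (x.1 + x.2) := by
  rw [summable_iff_summable_sum_antidiagonal_of_nonneg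
    fun x => mul_nonneg (binomialWeight_nonneg hs ht x) (hg0 _)]
  refine hg.congr fun n => ?_
  rw [Finset.sum_congr rfl fun x hx => by rw [mem_antidiagonal.1 hx], ← sum_mul,
    sum_antidiagonal_binomialWeight, hst, one_pow, one_mul]

def derivSummand (u v : ℕ → ℝ) (x : ℕ × ℕ) : ℝ :=
  Real.sqrt ((x.1 + x.2).choose x.2) * v (x.1 + x.2) * u x.2

theorem sq_derivSummand (u v : ℕ → ℝ) {p q r : ℝ} (hp : p ≠ 0) (hq : q ≠ 0) (hr : r ≠ 0)
    (x : ℕ × ℕ) :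
    derivSummand u v x ^ 2 = q ^ x.1 * (p ^ x.2 * u x.2 ^ 2)
      * (binomialWeight (r / q) (r / p) x * (v (x.1 + x.2) ^ 2 / r ^ (x.1 + x.2))) := by
  rw [derivSummand, binomialWeight, mul_pow, mul_pow, Real.sq_sqrt (Nat.cast_nonneg _),
    Nat.choose_symm_add, div_pow, div_pow]
  field_simp
  ring

theorem stmt13_general (u f v : ℕ → ℝ) (p q r : ℝ) (hp : 0 < p) (hq : 0 < q) (hr : 0 < r)
    (hpqr : 1 / p + 1 / q = 1 / r)
    (hu : Summable fun n => p ^ n * (u n) ^ 2)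
    (hf : Summable fun n => q ^ n * (f n) ^ 2)
    (hv : Summable fun n => (v n) ^ 2 / r ^ n) :
    (∀ n, Summable fun k => |Real.sqrt (Nat.choose (n + k) k) * v (n + k) * u k|) ∧
    Summable (fun n =>
      |(∑ k ∈ Finset.range (n + 1), Real.sqrt (Nat.choose n k) * f k * u (n - k)) * v n|) ∧
    Summable (fun n =>
      |f n * ∑' k, Real.sqrt (Nat.choose (n + k) k) * v (n + k) * u k|) ∧
    ∑' n, (∑ k ∈ Finset.range (n + 1), Real.sqrt (Nat.choose n k) * f k * u (n - k)) * v n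
      = ∑' n, f n * ∑' k, Real.sqrt (Nat.choose (n + k) k) * v (n + k) * u k := by
  have hst : r / q + r / p = 1 := by
    field_simp at hpqr ⊢
    linarith
  have hV : Summable fun x : ℕ × ℕ =>
      binomialWeight (r / q) (r / p) x * (v (x.1 + x.2) ^ 2 / r ^ (x.1 + x.2)) :=
    summable_binomialWeight_mul (g := fun n => v n ^ 2 / r ^ n) (by positivity) (by positivity) hst
      (fun n => by positivity) hv
  have hV0 : ∀ x : ℕ × ℕ, 0 ≤
      binomialWeight (r / q) (r / p) x * (v (x.1 + x.2) ^ 2 / r ^ (x.1 + x.2)) := fun x =>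
    mul_nonneg (binomialWeight_nonneg (by positivity) (by positivity) x) (by positivity)
  have hD : ∀ n, Summable fun k => |derivSummand u v (n, k)| := fun n =>
    summable_abs_of_sq_le_mul (hu.mul_left (q ^ n)) (hV.prod_factor n) (fun k => by positivity)
      (fun k => hV0 (n, k)) fun k => (sq_derivSummand u v hp.ne' hq.ne' hr.ne' (n, k)).le
  set F : ℕ × ℕ → ℝ := fun x => f x.1 * derivSummand u v x
  have hF : Summable fun x => |F x| :=
    summable_abs_of_sq_le_mul (hf.mul_of_nonneg hu (fun n => by positivity)
      (fun n => by positivity)) hV (fun x => by positivity) hV0 fun x => by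
        rw [mul_pow, sq_derivSummand u v hp.ne' hq.ne' hr.ne']
        exact le_of_eq (by ring)
  have hLHS : ∀ n, (∑ k ∈ range (n + 1), Real.sqrt (Nat.choose n k) * f k * u (n - k)) * v n
      = ∑ x ∈ antidiagonal n, F x := fun n => by
    rw [Nat.sum_antidiagonal_eq_sum_range_succ_mk, sum_mul]
    refine Finset.sum_congr rfl fun k hk => ?_
    have hkn : k ≤ n := Nat.lt_succ_iff.1 (mem_range.1 hk)
    simp only [F, derivSummand, Nat.add_sub_of_le hkn, Nat.choose_symm hkn]
    ring
  have hRHS : ∀ n, f n * ∑' k, Real.sqrt (Nat.choose (n + k) k) * v (n + k) * u k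
      = ∑' k, F (n, k) := fun n => tsum_mul_left.symm
  refine ⟨hD, ?_, ?_, ?_⟩
  · simp only [hLHS]
    exact ((summable_iff_summable_sum_antidiagonal_of_nonneg fun _ => abs_nonneg _).1 hF
      ).of_nonneg_of_le (fun _ => abs_nonneg _) fun n => abs_sum_le_sum_abs _ _
  · simp only [hRHS]
    refine hF.prod.of_nonneg_of_le (fun _ => abs_nonneg _) fun n => ?_
    simpa only [Real.norm_eq_abs] using norm_tsum_le_tsum_norm (f := fun k => F (n, k))
      (by simpa only [Real.norm_eq_abs] using hF.prod_factor n)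
  · simp only [hLHS, hRHS]
    have hF' : Summable F := hF.of_abs
    rw [hF'.tsum_sum_antidiagonal, hF'.tsum_prod]

/-- one-dimensional duality `⟨δ_u(f), v⟩ = ⟨f, D_u(v)⟩`. -/
theorem stmt13 (u f v : ℕ → ℝ) (p q r : ℝ) (hp : 0 < p) (hq : 0 < q) (hr : 0 < r)
    (hpqr : 1 / p + 1 / q = 1 / r) (hrp : r < p)
    (hu : Summable fun n => p ^ n * (u n) ^ 2)
    (hf : Summable fun n => q ^ n * (f n) ^ 2)
    (hv : Summable fun n => (v n) ^ 2 / r ^ n) :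
    (∀ n, Summable fun k => |Real.sqrt (Nat.choose (n + k) k) * v (n + k) * u k|) ∧
    Summable (fun n =>
      |(∑ k ∈ Finset.range (n + 1), Real.sqrt (Nat.choose n k) * f k * u (n - k)) * v n|) ∧
    Summable (fun n =>
      |f n * ∑' k, Real.sqrt (Nat.choose (n + k) k) * v (n + k) * u k|) ∧
    ∑' n, (∑ k ∈ Finset.range (n + 1), Real.sqrt (Nat.choose n k) * f k * u (n - k)) * v n
      = ∑' n, f n * ∑' k, Real.sqrt (Nat.choose (n + k) k) * v (n + k) * u k :=
  stmt13_general u f v p q r hp hq hr hpqr hu hf hv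
end
end
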